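/- Let D be a linearly connected digraph with strong components D_1, ..., D_η, and suppose D_p is nontrivial while D_{p+1}, ..., D_{p+ζ} are trivial for some ζ ≥ 1. Let v be the unique vertex of V_{p+1}, let Λ := {k ∈ ZMod κ_p : some vertex of U_k^{(p)} has an arc to v}, and for j ∈ ZMod κ_p and an integer i ≥ 0 define the subset i + L_{j→v} := {k − j + i + 1 : k ∈ Λ} of ZMod κ_p. Then for every i with 0 ≤ i ≤ ζ − 1, all j_1, j_2 ∈ ZMod κ_p, and every l ∈ ZMod κ_p, the following are equivalent: (a) l ∈ (i + L_{j_1→v}) ∩ (i + L_{j_2→v}); (b) there exists a positive integer N such that for every integer L ≥ N whose residue class modulo κ_p equals l, the unique vertex of V_{p+i+1} is an L-step prey of every vertex of U_{j_1}^{(p)} and of every vertex of U_{j_2}^{(p)}. -/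

import Mathlib

/-- A digraph: a finite vertex type with an irreflexive arc relation (no loops). -/
structure Digraph' (V : Type*) where
  Adj : V → V → Prop
  irrefl : ∀ v, ¬ Adj v v

namespace Digraph'

variable {V : Type*}

/-- There is a directed walk of length `m` from `x` to `y` in `D`;
i.e. `y` is an `m`-step prey of `x`. -/
def HasWalk (D : Digraph' V) (m : ℕ) (x y : V) : Prop :=
  ∃ f : ℕ → V, f 0 = x ∧ f m = y ∧ ∀ t, t < m → D.Adj (f t) (f (t + 1))

/-- There is a directed walk of length `m` from `x` to `y` staying inside `S`. -/
def HasWalkIn (D : Digraph' V) (S : Set V) (m : ℕ) (x y : V) : Prop :=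
  ∃ f : ℕ → V, f 0 = x ∧ f m = y ∧ (∀ t, t ≤ m → f t ∈ S) ∧
    ∀ t, t < m → D.Adj (f t) (f (t + 1))

/-- The `m`-step competition graph `C(D^m)` of `D`. -/
def compGraph (D : Digraph' V) (m : ℕ) : SimpleGraph V where
  Adj u v := u ≠ v ∧ ∃ z, D.HasWalk m u z ∧ D.HasWalk m v z
  symm := by
    constructor
    rintro u v ⟨hne, z, h1, h2⟩
    exact ⟨hne.symm, z, h2, h1⟩
  loopless := ⟨fun v h => h.1 rfl⟩

/-- The sequence `{C(D^m)}_{m ≥ 1}` converges. -/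
def CompConverges (D : Digraph' V) : Prop :=
  ∃ N : ℕ, 1 ≤ N ∧ ∀ m, N ≤ m → D.compGraph m = D.compGraph N

/-- The sequence `{C(D^m)}_{m ≥ 1}` converges to the graph `G`. -/
def CompConvergesTo (D : Digraph' V) (G : SimpleGraph V) : Prop :=
  ∃ N : ℕ, 1 ≤ N ∧ ∀ m, N ≤ m → D.compGraph m = G

/-- `D` is linearly connected with strong components `Vset 1, …, Vset η`. -/
structure IsLinConn (D : Digraph' V) (η : ℕ) (Vset : ℕ → Set V) : Prop where
  nonempty : ∀ i, 1 ≤ i → i ≤ η → (Vset i).Nonempty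
  cover : ∀ v : V, ∃ i, 1 ≤ i ∧ i ≤ η ∧ v ∈ Vset i
  disjoint' : ∀ i j, 1 ≤ i → i ≤ η → 1 ≤ j → j ≤ η →
      ∀ v : V, v ∈ Vset i → v ∈ Vset j → i = j
  strong : ∀ i, 1 ≤ i → i ≤ η → ∀ x ∈ Vset i, ∀ y ∈ Vset i,
      ∃ m, D.HasWalkIn (Vset i) m x y
  arcs : ∀ x y : V, D.Adj x y → ∃ i, 1 ≤ i ∧
      ((i ≤ η ∧ x ∈ Vset i ∧ y ∈ Vset i) ∨
       (i + 1 ≤ η ∧ x ∈ Vset i ∧ y ∈ Vset (i + 1)))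
  linked : ∀ i, 1 ≤ i → i + 1 ≤ η → ∃ x ∈ Vset i, ∃ y ∈ Vset (i + 1), D.Adj x y

/-- A component with vertex set `S` is trivial if `S` is a singleton. -/
def IsTrivialComp (S : Set V) : Prop := ∃ v : V, S = {v}

/-- `κ` is the index of imprimitivity of the (strong) component with vertex set `S`:
the gcd of the lengths of all closed directed walks inside `S`. -/
def IsImprimIndex (D : Digraph' V) (S : Set V) (κ : ℕ) : Prop :=
  (∀ (x : V) (m : ℕ), x ∈ S → 0 < m → D.HasWalkIn S m x x → κ ∣ m) ∧
  ∀ d : ℕ, (∀ (x : V) (m : ℕ), x ∈ S → 0 < m → D.HasWalkIn S m x x → d ∣ m) → d ∣ κ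

/-- `u` is an imprimitivity labelling on `S`: along any arc inside `S` the label
increases by one.  Its fibers are the sets of imprimitivity. -/
def IsImprimLabelling (D : Digraph' V) (S : Set V) {κ : ℕ} (u : V → ZMod κ) : Prop :=
  ∀ x ∈ S, ∀ y ∈ S, D.Adj x y → u y = u x + 1

/-- `(k, l) ∈ I(D_{p,p+1})`: some arc goes from a vertex of `U_k^{(p)}` to a vertex of
`U_l^{(p+1)}`. -/
def InI (D : Digraph' V) (Vset : ℕ → Set V) {κ : ℕ → ℕ}
    (u : ∀ i : ℕ, V → ZMod (κ i)) (p : ℕ) (k : ZMod (κ p)) (l : ZMod (κ (p + 1))) : Prop :=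
  ∃ x ∈ Vset p, ∃ y ∈ Vset (p + 1), D.Adj x y ∧ u p x = k ∧ u (p + 1) y = l

/-- `(i, j)` is an edge of the bipartite graph `B_{p,p+1}`. -/
def BAdj (D : Digraph' V) (Vset : ℕ → Set V) {κ : ℕ → ℕ}
    (u : ∀ i : ℕ, V → ZMod (κ i)) (p : ℕ) (i : ZMod (κ p)) (j : ZMod (κ (p + 1))) : Prop :=
  ∃ (k : ZMod (κ p)) (l : ZMod (κ (p + 1))) (a : ℤ),
    InI D Vset u p k l ∧ i = k + 1 + (a : ZMod (κ p)) ∧ j = l + (a : ZMod (κ (p + 1)))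

/-- The competition skeleton graph (CS-graph) `PT_D^{(η)}`: vertices are pairs `⟨r, i⟩`
with `i ∈ ZMod (κ r)` (only `1 ≤ r ≤ η` carries edges); `⟨p, i⟩` and `⟨p+1, j⟩` are
adjacent exactly when `i` and `j` are adjacent in `B_{p,p+1}`. -/
def csGraph (D : Digraph' V) (Vset : ℕ → Set V) {κ : ℕ → ℕ}
    (u : ∀ i : ℕ, V → ZMod (κ i)) (η : ℕ) : SimpleGraph ((r : ℕ) × ZMod (κ r)) where
  Adj a b := ∃ p, 1 ≤ p ∧ p + 1 ≤ η ∧ ∃ (i : ZMod (κ p)) (j : ZMod (κ (p + 1))),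
    BAdj D Vset u p i j ∧
    ((a = ⟨p, i⟩ ∧ b = ⟨p + 1, j⟩) ∨ (a = ⟨p + 1, j⟩ ∧ b = ⟨p, i⟩))
  symm := by
    constructor
    rintro a b ⟨p, h1, h2, i, j, hB, hab⟩
    exact ⟨p, h1, h2, i, j, hB,
      hab.elim (fun h => Or.inr ⟨h.2, h.1⟩) (fun h => Or.inl ⟨h.2, h.1⟩)⟩
  loopless := by
    constructor
    rintro a ⟨p, _, _, i, j, _, hab⟩
    rcases hab with ⟨ha, hb⟩ | ⟨ha, hb⟩
    · have h : p = p + 1 := congrArg Sigma.fst (ha.symm.trans hb)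
      omega
    · have h : p + 1 = p := congrArg Sigma.fst (ha.symm.trans hb)
      omega

end Digraph'

/-!
Every walk from `D_p` to the unique vertex `w` of `V_{p+i+1}` runs inside `D_p` up to a
vertex `z` with an arc to `v`, and then along the forced path `v → ⋯ → w` of length `i`; so a
walk of length `L` from `x` exists iff some `z` with an arc to `v` is reachable from `x`
inside `D_p` in `L - i - 1` steps. The labels increase by one along arcs of `D_p`, so this
forces `L - i - 1 ≡ u z - u x`; conversely the closed-walk lengths at a vertex of `D_p` form a
submonoid of `ℕ` with gcd `κ_p`, hence contain every large multiple of `κ_p`, so every large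
length with the right residue is realised, uniformly over the finitely many vertices.
-/

open Filter

namespace Digraph'

variable {V : Type*} {D : Digraph' V} {S : Set V} {x y z : V} {m n : ℕ}

theorem hasWalkIn_zero_iff : D.HasWalkIn S 0 x y ↔ x = y ∧ x ∈ S := by
  constructor
  · rintro ⟨f, rfl, rfl, hmem, -⟩
    exact ⟨rfl, hmem 0 le_rfl⟩
  · rintro ⟨rfl, hx⟩
    exact ⟨fun _ => x, rfl, rfl, fun _ _ => hx, fun t ht => absurd ht (Nat.not_lt_zero t)⟩

theorem hasWalkIn_succ_iff :
    D.HasWalkIn S (m + 1) x z ↔ ∃ y, D.HasWalkIn S m x y ∧ z ∈ S ∧ D.Adj y z := by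
  constructor
  · rintro ⟨f, rfl, rfl, hmem, hadj⟩
    exact ⟨f m, ⟨f, rfl, rfl, fun t ht => hmem t (by omega), fun t ht => hadj t (by omega)⟩,
      hmem _ le_rfl, hadj m (by omega)⟩
  · rintro ⟨y, ⟨f, rfl, rfl, hmem, hadj⟩, hz, hyz⟩
    refine ⟨fun t => if t ≤ m then f t else z, by simp, by simp, fun t _ => ?_, fun t ht => ?_⟩
    · dsimp only
      split_ifs with ht
      exacts [hmem t ht, hz]
    · obtain ht | rfl : t + 1 ≤ m ∨ t = m := by omega
      · simpa [ht, show t ≤ m by omega] using hadj t ht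
      · simpa using hyz

theorem HasWalkIn.mono {T : Set V} (h : D.HasWalkIn S m x y) (hST : S ⊆ T) :
    D.HasWalkIn T m x y :=
  let ⟨f, h0, hm, hmem, hadj⟩ := h
  ⟨f, h0, hm, fun t ht => hST (hmem t ht), hadj⟩

theorem hasWalkIn_univ_iff : D.HasWalkIn Set.univ m x y ↔ D.HasWalk m x y :=
  ⟨fun ⟨f, h0, hm, _, hadj⟩ => ⟨f, h0, hm, hadj⟩,
    fun ⟨f, h0, hm, hadj⟩ => ⟨f, h0, hm, fun _ _ => trivial, hadj⟩⟩

theorem HasWalkIn.hasWalk (h : D.HasWalkIn S m x y) : D.HasWalk m x y :=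
  hasWalkIn_univ_iff.1 (h.mono (Set.subset_univ S))

theorem HasWalkIn.mem_right (h : D.HasWalkIn S m x y) : y ∈ S := by
  obtain ⟨f, -, rfl, hmem, -⟩ := h
  exact hmem m le_rfl

theorem hasWalk_zero_iff : D.HasWalk 0 x y ↔ x = y := by
  simp [← hasWalkIn_univ_iff, hasWalkIn_zero_iff]

theorem hasWalk_succ_iff : D.HasWalk (m + 1) x z ↔ ∃ y, D.HasWalk m x y ∧ D.Adj y z := by
  simp [← hasWalkIn_univ_iff, hasWalkIn_succ_iff]

theorem HasWalkIn.trans (h₁ : D.HasWalkIn S m x y) (h₂ : D.HasWalkIn S n y z) :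
    D.HasWalkIn S (m + n) x z := by
  induction n generalizing z with
  | zero =>
    obtain ⟨rfl, -⟩ := hasWalkIn_zero_iff.1 h₂
    exact h₁
  | succ n ih =>
    obtain ⟨y', h', hz, hadj⟩ := hasWalkIn_succ_iff.1 h₂
    exact hasWalkIn_succ_iff.2 ⟨y', ih h', hz, hadj⟩

theorem HasWalkIn.exists_split (h : D.HasWalkIn S (m + n) x z) :
    ∃ y, D.HasWalkIn S m x y ∧ D.HasWalkIn S n y z := by
  induction n generalizing z with
  | zero => exact ⟨z, h, hasWalkIn_zero_iff.2 ⟨rfl, h.mem_right⟩⟩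
  | succ n ih =>
    obtain ⟨y', h', hz, hadj⟩ := hasWalkIn_succ_iff.1 h
    obtain ⟨y, h₁, h₂⟩ := ih h'
    exact ⟨y, h₁, hasWalkIn_succ_iff.2 ⟨y', h₂, hz, hadj⟩⟩

theorem IsImprimLabelling.eq_add_of_hasWalkIn {κ : ℕ} {u : V → ZMod κ}
    (hu : D.IsImprimLabelling S u) (h : D.HasWalkIn S m x y) : u y = u x + m := by
  induction m generalizing y with
  | zero =>
    obtain ⟨rfl, -⟩ := hasWalkIn_zero_iff.1 h
    simp
  | succ m ih =>
    obtain ⟨y', h', hy, hadj⟩ := hasWalkIn_succ_iff.1 h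
    rw [hu y' h'.mem_right y hy hadj, ih h']
    push_cast
    ring

def IsStronglyConnectedOn (D : Digraph' V) (S : Set V) : Prop :=
  ∀ x ∈ S, ∀ y ∈ S, ∃ m, D.HasWalkIn S m x y

def closedWalkLengths (D : Digraph' V) (S : Set V) (x : V) (hx : x ∈ S) : AddSubmonoid ℕ where
  carrier := {m | D.HasWalkIn S m x x}
  zero_mem' := hasWalkIn_zero_iff.2 ⟨rfl, hx⟩
  add_mem' := HasWalkIn.trans

section Imprimitivity

variable {κ : ℕ}

theorem setGcd_closedWalkLengths (hS : D.IsStronglyConnectedOn S) (hκ : D.IsImprimIndex S κ)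
    (hx : x ∈ S) :
    Nat.setGcd (D.closedWalkLengths S x hx) = κ := by
  refine Nat.dvd_antisymm (hκ.2 _ fun z m hz _ hzz => ?_) (Nat.dvd_setGcd_iff.2 fun m hm => ?_)
  · obtain ⟨a, hxz⟩ := hS x hx z hz
    obtain ⟨b, hzx⟩ := hS z hz x hx
    have hab := Nat.setGcd_dvd_of_mem (s := D.closedWalkLengths S x hx) (hxz.trans hzx)
    have hamb := Nat.setGcd_dvd_of_mem (s := D.closedWalkLengths S x hx) (hxz.trans (hzz.trans hzx))
    rw [show a + (m + b) = a + b + m by ring] at hamb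
    exact (Nat.dvd_add_right hab).1 hamb
  · rcases Nat.eq_zero_or_pos m with rfl | hm0
    exacts [dvd_zero κ, hκ.1 x m hx hm0 hm]

theorem eventually_hasWalkIn_self (hS : D.IsStronglyConnectedOn S) (hκ : D.IsImprimIndex S κ)
    (hx : x ∈ S) : ∀ᶠ m in atTop, κ ∣ m → D.HasWalkIn S m x x := by
  obtain ⟨N, hN⟩ := Nat.exists_mem_closure_of_ge (D.closedWalkLengths S x hx : Set ℕ)
  rw [AddSubmonoid.closure_eq, setGcd_closedWalkLengths hS hκ hx] at hN
  exact eventually_atTop.2 ⟨N, hN⟩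

theorem IsImprimIndex.pos (hS : D.IsStronglyConnectedOn S) (hκ : D.IsImprimIndex S κ)
    (hx : x ∈ S) (hy : y ∈ S) (hxy : x ≠ y) : 0 < κ := by
  obtain ⟨a, hxy'⟩ := hS x hx y hy
  obtain ⟨b, hyx⟩ := hS y hy x hx
  have ha : a ≠ 0 := by
    rintro rfl
    exact hxy (hasWalkIn_zero_iff.1 hxy').1
  exact Nat.pos_of_dvd_of_pos (hκ.1 x (a + b) hx (by omega) (hxy'.trans hyx)) (by omega)

theorem IsImprimLabelling.eventually_hasWalkIn {u : V → ZMod κ} (hS : D.IsStronglyConnectedOn S)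
    (hκ : D.IsImprimIndex S κ) (hu : D.IsImprimLabelling S u) (hx : x ∈ S) (hy : y ∈ S) :
    ∀ᶠ m : ℕ in atTop, (m : ZMod κ) = u y - u x → D.HasWalkIn S m x y := by
  obtain ⟨a, hxy⟩ := hS x hx y hy
  have hlabel := hu.eq_add_of_hasWalkIn hxy
  filter_upwards [(tendsto_sub_atTop_nat a).eventually (eventually_hasWalkIn_self hS hκ hx),
    eventually_ge_atTop a] with m hloop ham hm
  have hdvd : κ ∣ m - a := by
    rw [← ZMod.natCast_eq_zero_iff, Nat.cast_sub ham, hm, hlabel]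
    ring
  simpa [Nat.sub_add_cancel ham] using (hloop hdvd).trans hxy

theorem IsImprimLabelling.surjOn [NeZero κ] {u : V → ZMod κ} (hS : D.IsStronglyConnectedOn S)
    (hκ : D.IsImprimIndex S κ) (hu : D.IsImprimLabelling S u) (hx : x ∈ S) :
    Set.SurjOn u S Set.univ := by
  intro j _
  obtain ⟨N, hN⟩ := eventually_atTop.1 (eventually_hasWalkIn_self hS hκ hx)
  set r := (j - u x).val
  have hr : r ≤ κ * (N + 1) := by
    have := ZMod.val_lt (j - u x)
    nlinarith
  obtain ⟨y, hxy, -⟩ := (show D.HasWalkIn S (r + (κ * (N + 1) - r)) x x by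
    rw [Nat.add_sub_cancel' hr]
    exact hN _ (by nlinarith [NeZero.pos κ]) (dvd_mul_right κ _)).exists_split
  refine ⟨y, hxy.mem_right, ?_⟩
  rw [hu.eq_add_of_hasWalkIn hxy, ZMod.natCast_val, ZMod.cast_id]
  ring

end Imprimitivity

namespace IsLinConn

variable {η : ℕ} {Vset : ℕ → Set V}

noncomputable def index (hD : D.IsLinConn η Vset) (x : V) : ℕ :=
  (hD.cover x).choose

theorem mem_index (hD : D.IsLinConn η Vset) (x : V) : x ∈ Vset (hD.index x) :=
  (hD.cover x).choose_spec.2.2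

theorem index_eq (hD : D.IsLinConn η Vset) {q : ℕ} (hq : 1 ≤ q) (hqη : q ≤ η)
    (hx : x ∈ Vset q) : hD.index x = q :=
  let h := (hD.cover x).choose_spec
  hD.disjoint' _ q h.1 h.2.1 hq hqη x h.2.2 hx

theorem ne_of_mem (hD : D.IsLinConn η Vset) {q r : ℕ} (hq : 1 ≤ q) (hqη : q ≤ η) (hr : 1 ≤ r)
    (hrη : r ≤ η) (hqr : q ≠ r) (hx : x ∈ Vset q) (hy : y ∈ Vset r) : x ≠ y := by
  rintro rfl
  exact hqr (hD.disjoint' q r hq hqη hr hrη x hx hy)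

theorem index_le_of_adj (hD : D.IsLinConn η Vset) (hxy : D.Adj x y) :
    hD.index x ≤ hD.index y ∧ hD.index y ≤ hD.index x + 1 := by
  obtain ⟨q, hq, ⟨hqη, hx, hy⟩ | ⟨hqη, hx, hy⟩⟩ := hD.arcs x y hxy
  · rw [hD.index_eq hq hqη hx, hD.index_eq hq hqη hy]
    omega
  · rw [hD.index_eq hq (by omega) hx, hD.index_eq (by omega) hqη hy]
    omega

theorem index_le_of_hasWalk (hD : D.IsLinConn η Vset) (h : D.HasWalk m x y) :
    hD.index x ≤ hD.index y := by
  induction m generalizing y with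
  | zero => rw [(hasWalk_zero_iff.1 h)]
  | succ m ih =>
    obtain ⟨y', h', hadj⟩ := hasWalk_succ_iff.1 h
    exact (ih h').trans (hD.index_le_of_adj hadj).1

theorem hasWalkIn_of_hasWalk (hD : D.IsLinConn η Vset) {q : ℕ} (hq : 1 ≤ q) (hqη : q ≤ η)
    (hx : x ∈ Vset q) (hy : y ∈ Vset q) (h : D.HasWalk m x y) : D.HasWalkIn (Vset q) m x y := by
  induction m generalizing y with
  | zero =>
    obtain rfl := hasWalk_zero_iff.1 h
    exact hasWalkIn_zero_iff.2 ⟨rfl, hx⟩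
  | succ m ih =>
    obtain ⟨y', h', hadj⟩ := hasWalk_succ_iff.1 h
    have hy' : hD.index y' = q :=
      le_antisymm (hD.index_eq hq hqη hy ▸ (hD.index_le_of_adj hadj).1)
        (hD.index_eq hq hqη hx ▸ hD.index_le_of_hasWalk h')
    exact hasWalkIn_succ_iff.2 ⟨y', ih (hy' ▸ hD.mem_index y') h', hy, hadj⟩

theorem mem_of_adj_of_eq_singleton (hD : D.IsLinConn η Vset) {q : ℕ} (hq : 1 ≤ q)
    (hqη : q + 1 ≤ η) (hz : Vset (q + 1) = {z}) (hyz : D.Adj y z) : y ∈ Vset q := by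
  have hzq : hD.index z = q + 1 := hD.index_eq (by omega) hqη (hz ▸ rfl)
  have hyq := hD.index_le_of_adj hyz
  obtain hy | hy : hD.index y = q ∨ hD.index y = q + 1 := by omega
  · exact hy ▸ hD.mem_index y
  · have : y = z := by simpa [hy, hz] using hD.mem_index y
    exact absurd (this ▸ hyz) (D.irrefl z)

theorem hasWalk_iff_of_eq_singleton (hD : D.IsLinConn η Vset) {q : ℕ} (hq : 1 ≤ q)
    (hqη : q + 1 ≤ η) (hz : Vset (q + 1) = {z}) (hxz : x ≠ z) {L : ℕ} :
    D.HasWalk L x z ↔ ∃ L', L = L' + 1 ∧ ∃ y ∈ Vset q, D.HasWalk L' x y ∧ D.Adj y z := by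
  cases L with
  | zero => simp [hasWalk_zero_iff, hxz]
  | succ L =>
    simp only [hasWalk_succ_iff, Nat.add_right_cancel_iff, exists_eq_left']
    exact ⟨fun ⟨y, h, hyz⟩ => ⟨y, hD.mem_of_adj_of_eq_singleton hq hqη hz hyz, h, hyz⟩,
      fun ⟨y, _, h, hyz⟩ => ⟨y, h, hyz⟩⟩

theorem hasWalk_iff_of_trivial_chain (hD : D.IsLinConn η Vset) {p ζ : ℕ} (hp : 1 ≤ p)
    (hpζ : p + ζ ≤ η) (htr : ∀ t, 1 ≤ t → t ≤ ζ → IsTrivialComp (Vset (p + t)))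
    {v : V} (hv : Vset (p + 1) = {v}) (hx : x ∈ Vset p) {i : ℕ} (hi : i + 1 ≤ ζ) {w : V}
    (hw : Vset (p + i + 1) = {w}) {L : ℕ} :
    D.HasWalk L x w ↔ ∃ M, L = M + i + 1 ∧ ∃ z, D.HasWalkIn (Vset p) M x z ∧ D.Adj z v := by
  induction i generalizing w L with
  | zero =>
    obtain rfl : w = v := Set.singleton_injective (hw.symm.trans hv)
    rw [hD.hasWalk_iff_of_eq_singleton hp (by omega) hv
      (hD.ne_of_mem (r := p + 1) hp (by omega) (by omega) (by omega) (by omega) hx (by simp [hv]))]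
    refine exists_congr fun M => and_congr_right fun _ => ⟨?_, ?_⟩
    · rintro ⟨y, hy, h, hyw⟩
      exact ⟨y, hD.hasWalkIn_of_hasWalk hp (by omega) hx hy h, hyw⟩
    · rintro ⟨z, h, hzw⟩
      exact ⟨z, h.mem_right, h.hasWalk, hzw⟩
  | succ i ih =>
    obtain ⟨w', hw'⟩ := htr (i + 1) (by omega) (by omega)
    have hw'w : D.Adj w' w := by
      obtain ⟨a, ha, b, hb, hab⟩ := hD.linked (p + (i + 1)) (by omega) (by omega)
      rw [hw'] at ha
      rw [hw] at hb
      rwa [← ha, ← hb]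
    rw [hD.hasWalk_iff_of_eq_singleton (q := p + (i + 1)) (by omega) (by omega) hw
      (hD.ne_of_mem (r := p + (i + 1) + 1) hp (by omega) (by omega) (by omega) (by omega) hx
        (by simp [hw]))]
    simp only [hw', Set.mem_singleton_iff, exists_eq_left, hw'w, and_true, ih (by omega) hw']
    constructor
    · rintro ⟨L', rfl, M, rfl, hM⟩
      exact ⟨M, rfl, hM⟩
    · rintro ⟨M, rfl, hM⟩
      exact ⟨M + i + 1, rfl, M, rfl, hM⟩

theorem exists_arc_iff_eventually_hasWalk [Finite V] (hD : D.IsLinConn η Vset) {p ζ : ℕ}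
    (hp : 1 ≤ p) (hpζ : p + ζ ≤ η) (htr : ∀ t, 1 ≤ t → t ≤ ζ → IsTrivialComp (Vset (p + t)))
    {v : V} (hv : Vset (p + 1) = {v}) {i : ℕ} (hi : i + 1 ≤ ζ) {w : V}
    (hw : Vset (p + i + 1) = {w}) {κ : ℕ} [NeZero κ] {u : V → ZMod κ}
    (hκ : D.IsImprimIndex (Vset p) κ) (hu : D.IsImprimLabelling (Vset p) u) (j l : ZMod κ) :
    (∃ k : ZMod κ, (∃ x ∈ Vset p, u x = k ∧ D.Adj x v) ∧ l = k - j + (i : ZMod κ) + 1) ↔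
      ∀ᶠ L : ℕ in atTop, (L : ZMod κ) = l → ∀ x ∈ Vset p, u x = j → D.HasWalk L x w := by
  have hS : D.IsStronglyConnectedOn (Vset p) := hD.strong p hp (by omega)
  constructor
  · rintro ⟨_, ⟨z, hz, rfl, hzv⟩, rfl⟩
    have hreach : ∀ᶠ M : ℕ in atTop, ∀ x ∈ Vset p,
        (M : ZMod κ) = u z - u x → D.HasWalkIn (Vset p) M x z :=
      (eventually_all_finite (Vset p).toFinite).2 fun x hx => hu.eventually_hasWalkIn hS hκ hx hz
    filter_upwards [(tendsto_sub_atTop_nat (i + 1)).eventually hreach,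
      eventually_ge_atTop (i + 1)] with L hL hiL hLl x hx rfl
    refine (hD.hasWalk_iff_of_trivial_chain hp hpζ htr hv hx hi hw).2
      ⟨L - (i + 1), by omega, z, hL x hx ?_, hzv⟩
    rw [Nat.cast_sub hiL, hLl]
    push_cast
    ring
  · intro h
    obtain ⟨x₀, hx₀⟩ := hD.nonempty p hp (by omega)
    obtain ⟨x, hx, rfl⟩ := hu.surjOn hS hκ hx₀ (Set.mem_univ j)
    obtain ⟨N, hN⟩ := eventually_atTop.1 h
    have hL : ((l.val + κ * N : ℕ) : ZMod κ) = l := by simp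
    obtain ⟨M, hLM, z, hxz, hzv⟩ := (hD.hasWalk_iff_of_trivial_chain hp hpζ htr hv hx hi hw).1
      (hN _ (by nlinarith [NeZero.pos κ]) hL x hx rfl)
    refine ⟨u z, ⟨z, hxz.mem_right, rfl, hzv⟩, ?_⟩
    rw [← hL, hLM, hu.eq_add_of_hasWalkIn hxz]
    push_cast
    ring

end IsLinConn

end Digraph'

open Digraph' in
theorem stmt18_general {V : Type*} [Fintype V] (D : Digraph' V) (η : ℕ) (Vset : ℕ → Set V)
    (hD : D.IsLinConn η Vset)
    (p ζ : ℕ) (hp : 1 ≤ p) (hpζ : p + ζ ≤ η)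
    (hpnt : ¬ IsTrivialComp (Vset p))
    (htr : ∀ t, 1 ≤ t → t ≤ ζ → IsTrivialComp (Vset (p + t)))
    (κ : ℕ → ℕ) (u : ∀ i : ℕ, V → ZMod (κ i))
    (hκ : IsImprimIndex D (Vset p) (κ p))
    (hu : IsImprimLabelling D (Vset p) (u p))
    (v : V) (hv : Vset (p + 1) = {v})
    (i : ℕ) (hi : i + 1 ≤ ζ)
    (j₁ j₂ l : ZMod (κ p))
    (w : V) (hw : Vset (p + i + 1) = {w}) :
    ((∃ k : ZMod (κ p), (∃ x ∈ Vset p, u p x = k ∧ D.Adj x v) ∧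
        l = k - j₁ + (i : ZMod (κ p)) + 1) ∧
     (∃ k : ZMod (κ p), (∃ x ∈ Vset p, u p x = k ∧ D.Adj x v) ∧
        l = k - j₂ + (i : ZMod (κ p)) + 1)) ↔
    (∃ N, 1 ≤ N ∧ ∀ L : ℕ, N ≤ L → (L : ZMod (κ p)) = l →
       (∀ x ∈ Vset p, u p x = j₁ → D.HasWalk L x w) ∧
       (∀ x ∈ Vset p, u p x = j₂ → D.HasWalk L x w)) := by
  have hpη : p ≤ η := by omega
  obtain ⟨x₀, hx₀⟩ := hD.nonempty p hp hpη
  obtain ⟨y₀, hy₀, hne⟩ : ∃ y ∈ Vset p, y ≠ x₀ := by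
    by_contra! h
    exact hpnt ⟨x₀, Set.eq_singleton_iff_unique_mem.2 ⟨hx₀, h⟩⟩
  have : NeZero (κ p) := ⟨(hκ.pos (hD.strong p hp hpη) hy₀ hx₀ hne).ne'⟩
  rw [hD.exists_arc_iff_eventually_hasWalk hp hpζ htr hv hi hw hκ hu j₁ l,
    hD.exists_arc_iff_eventually_hasWalk hp hpζ htr hv hi hw hκ hu j₂ l, ← eventually_and,
    (atTop_basis' 1).eventually_iff]
  simp only [Set.mem_Ici, imp_and]

open Digraph' in
/-- with `D_p` nontrivial and `D_{p+1}, …, D_{p+ζ}` trivial,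
membership of `l` in `(i + L_{j₁→v}) ∩ (i + L_{j₂→v})` is equivalent to the unique
vertex of `V_{p+i+1}` being an `L`-step prey of every vertex of `U_{j₁}^{(p)}` and of
every vertex of `U_{j₂}^{(p)}` for all large `L ≡ l (mod κ_p)`. -/
theorem stmt18 {V : Type*} [Fintype V] (D : Digraph' V) (η : ℕ) (Vset : ℕ → Set V)
    (hD : D.IsLinConn η Vset)
    (p ζ : ℕ) (hp : 1 ≤ p) (hζ : 1 ≤ ζ) (hpζ : p + ζ ≤ η)
    (hpnt : ¬ IsTrivialComp (Vset p))
    (htr : ∀ t, 1 ≤ t → t ≤ ζ → IsTrivialComp (Vset (p + t)))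
    (κ : ℕ → ℕ) (u : ∀ i : ℕ, V → ZMod (κ i))
    (hκ : IsImprimIndex D (Vset p) (κ p))
    (hu : IsImprimLabelling D (Vset p) (u p))
    (v : V) (hv : Vset (p + 1) = {v})
    (i : ℕ) (hi : i + 1 ≤ ζ)
    (j₁ j₂ l : ZMod (κ p))
    (w : V) (hw : Vset (p + i + 1) = {w}) :
    ((∃ k : ZMod (κ p), (∃ x ∈ Vset p, u p x = k ∧ D.Adj x v) ∧
        l = k - j₁ + (i : ZMod (κ p)) + 1) ∧
     (∃ k : ZMod (κ p), (∃ x ∈ Vset p, u p x = k ∧ D.Adj x v) ∧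
        l = k - j₂ + (i : ZMod (κ p)) + 1)) ↔
    (∃ N, 1 ≤ N ∧ ∀ L : ℕ, N ≤ L → (L : ZMod (κ p)) = l →
       (∀ x ∈ Vset p, u p x = j₁ → D.HasWalk L x w) ∧
       (∀ x ∈ Vset p, u p x = j₂ → D.HasWalk L x w)) :=
  stmt18_general D η Vset hD p ζ hp hpζ hpnt htr κ u hκ hu v hv i hi j₁ j₂ l w hw
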